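/- Let A, B be as above and for m >= 1 set W_m = (BA^{-1})^m (B^{-1}A)^m. Then det(I - (BA^{-1})^m (I + AB^{-1} + ... + (AB^{-1})^m)) = det(I + BA^{-1} + ... + (BA^{-1})^{m-1}). -/

import Mathlib

noncomputable section

/-- The ring of Laurent polynomials in `s` and ordinary polynomials in `y`
over `ℂ`, i.e. `ℂ[s^{±1}, y]`. -/
abbrev R2 : Type := AddMonoidAlgebra ℂ (ℤ × ℕ)

/-- The variable `s`. -/
def s : R2 := AddMonoidAlgebra.single (1, 0) 1
/-- The inverse variable `s⁻¹`. -/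
def sInv : R2 := AddMonoidAlgebra.single (-1, 0) 1
/-- The variable `y`. -/
def y : R2 := AddMonoidAlgebra.single (0, 1) 1

/-- `A = [[s,1],[0,s⁻¹]]`. -/
def A : Matrix (Fin 2) (Fin 2) R2 := !![s, 1; 0, sInv]
/-- `B = [[s,0],[-y,s⁻¹]]`. -/
def B : Matrix (Fin 2) (Fin 2) R2 := !![s, 0; -y, sInv]


section RightInverse

open Finset

variable {R : Type*} [Ring R] {u v : R}

theorem pow_mul_pow_of_mul_eq_one (huv : u * v = 1) {j m : ℕ} (hj : j ≤ m) :
    u ^ m * v ^ j = u ^ (m - j) := by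
  rw [← pow_sub_mul_pow u hj, mul_assoc, pow_mul_pow_eq_one j huv, mul_one]

/-- With `v = u⁻¹`, the terms `u ^ m * v ^ j` are the powers `u ^ 0, …, u ^ m` in reverse order. -/
theorem one_sub_pow_mul_geom_sum_of_mul_eq_one (huv : u * v = 1) (m : ℕ) :
    1 - u ^ m * ∑ j ∈ range (m + 1), v ^ j = -(u * ∑ j ∈ range m, u ^ j) := by
  have reflect : u ^ m * ∑ j ∈ range (m + 1), v ^ j = ∑ j ∈ range (m + 1), u ^ j := by
    rw [mul_sum, ← sum_range_reflect (u ^ ·)]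
    refine sum_congr rfl fun j hj => ?_
    rw [pow_mul_pow_of_mul_eq_one huv (Nat.le_of_lt_succ (mem_range.mp hj)), Nat.add_sub_cancel]
  rw [reflect, sum_range_succ', mul_sum]
  simp only [pow_succ', pow_zero]
  abel

end RightInverse

theorem s_mul_sInv : s * sInv = 1 := by
  rw [s, sInv, AddMonoidAlgebra.single_mul_single, mul_one]
  rfl

theorem det_A : A.det = 1 := by
  simp [A, Matrix.det_fin_two_of, s_mul_sInv]

theorem det_B : B.det = 1 := by
  simp [B, Matrix.det_fin_two_of, s_mul_sInv]

theorem det_B_mul_A_inv : (B * A⁻¹).det = 1 := by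
  rw [Matrix.det_mul, Matrix.det_nonsing_inv, det_A, det_B, Ring.inverse_one, mul_one]

theorem B_mul_A_inv_mul_A_mul_B_inv : B * A⁻¹ * (A * B⁻¹) = 1 := by
  have hA : A⁻¹ * A = 1 := Matrix.nonsing_inv_mul A (by simp [det_A])
  have hB : B * B⁻¹ = 1 := Matrix.mul_nonsing_inv B (by simp [det_B])
  rw [mul_assoc, ← mul_assoc A⁻¹, hA, one_mul, hB]

open Finset in
theorem stmt_6_general (m : ℕ) :
    (1 - (B * A⁻¹) ^ m * (∑ j ∈ range (m + 1), (A * B⁻¹) ^ j)).det =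
      (∑ j ∈ range m, (B * A⁻¹) ^ j).det := by
  rw [one_sub_pow_mul_geom_sum_of_mul_eq_one B_mul_A_inv_mul_A_mul_B_inv, Matrix.det_neg,
    Matrix.det_mul, det_B_mul_A_inv]
  simp

open Finset in
/-- `det(I - (BA⁻¹)^m (I + AB⁻¹ + ⋯ + (AB⁻¹)^m)) = det(I + BA⁻¹ + ⋯ + (BA⁻¹)^{m-1})`. -/
theorem stmt_6 (m : ℕ) (hm : 1 ≤ m) :
    (1 - (B * A⁻¹) ^ m * (∑ j ∈ range (m + 1), (A * B⁻¹) ^ j)).det =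
      (∑ j ∈ range m, (B * A⁻¹) ^ j).det :=
  stmt_6_general m
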